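/- Fix k ∈ ℕ, k ≥ 1, and p ≥ 1. Then ‖e_k − R̄_h(R_h e_k)‖_{L^p((−L,L)²)} → 0 as m → ∞ (with J = 2^m, h = 2L/J), where R̄_h denotes the cellwise averaging operator on the partition into cells D_𝐢. -/

import Mathlib

noncomputable section

open Set

/-- Mesh size `h = 2L/J`. -/
def meshH (L : ℝ) (J : ℕ) : ℝ := 2 * L / J

/-- Grid node `x_i = −L + i·h`. -/
def nodeX (L : ℝ) (J : ℕ) (i : ℕ) : ℝ := -L + i * meshH L J

/-- The one-dimensional piecewise constant basis functions `φ_i`, `i = 1, …, J`: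
`φ_1 = (3/2)·1_{[x_0,x_1]} − (1/2)·1_{(x_1,x_2]}`,
`φ_i = −(1/2)·1_{(x_{i−2},x_{i−1}]} + 1_{(x_{i−1},x_i]} − (1/2)·1_{(x_i,x_{i+1}]}`
for `2 ≤ i ≤ J−1`, and
`φ_J = −(1/2)·1_{(x_{J−2},x_{J−1}]} + (3/2)·1_{(x_{J−1},x_J]}` (zero outside). -/
def phiF (L : ℝ) (J : ℕ) (i : ℕ) : ℝ → ℝ := fun x =>
  if i = 1 then
    (if x ∈ Icc (nodeX L J 0) (nodeX L J 1) then (3 : ℝ) / 2 else 0)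
      + (if x ∈ Ioc (nodeX L J 1) (nodeX L J 2) then -(1 : ℝ) / 2 else 0)
  else if i = J then
    (if x ∈ Ioc (nodeX L J (J - 2)) (nodeX L J (J - 1)) then -(1 : ℝ) / 2 else 0)
      + (if x ∈ Ioc (nodeX L J (J - 1)) (nodeX L J J) then (3 : ℝ) / 2 else 0)
  else
    (if x ∈ Ioc (nodeX L J (i - 2)) (nodeX L J (i - 1)) then -(1 : ℝ) / 2 else 0)
      + (if x ∈ Ioc (nodeX L J (i - 1)) (nodeX L J i) then (1 : ℝ) else 0)
      + (if x ∈ Ioc (nodeX L J i) (nodeX L J (i + 1)) then -(1 : ℝ) / 2 else 0)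

/-- The one-dimensional piecewise quadratic functions `ψ_i = (−Δ)⁻¹ φ_i`,
extended by `0` outside their support. -/
def psiF (L : ℝ) (J : ℕ) (i : ℕ) : ℝ → ℝ := fun x =>
  if i = 1 then
    (if x ∈ Icc (nodeX L J 0) (nodeX L J 1) then
        -(3 : ℝ) / 4 * (x - nodeX L J 0) ^ 2 + meshH L J * (x - nodeX L J 0) else 0)
      + (if x ∈ Ioc (nodeX L J 1) (nodeX L J 2) then
        (1 : ℝ) / 4 * (x - nodeX L J 1) ^ 2 - meshH L J / 2 * (x - nodeX L J 1)
          + (meshH L J) ^ 2 / 4 else 0)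
  else if i = J then
    (if x ∈ Ioc (nodeX L J (J - 2)) (nodeX L J (J - 1)) then
        (1 : ℝ) / 4 * (nodeX L J (J - 1) - x) ^ 2 - meshH L J / 2 * (nodeX L J (J - 1) - x)
          + (meshH L J) ^ 2 / 4 else 0)
      + (if x ∈ Ioc (nodeX L J (J - 1)) (nodeX L J J) then
        -(3 : ℝ) / 4 * (nodeX L J J - x) ^ 2 + meshH L J * (nodeX L J J - x) else 0)
  else
    (if x ∈ Ioc (nodeX L J (i - 2)) (nodeX L J (i - 1)) then
        (1 : ℝ) / 4 * (x - nodeX L J (i - 2)) ^ 2 else 0)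
      + (if x ∈ Ioc (nodeX L J (i - 1)) (nodeX L J i) then
        -(1 : ℝ) / 2 * (x - nodeX L J (i - 1) - meshH L J / 2) ^ 2
          + 3 * (meshH L J) ^ 2 / 8 else 0)
      + (if x ∈ Ioc (nodeX L J i) (nodeX L J (i + 1)) then
        (1 : ℝ) / 4 * (nodeX L J (i + 1) - x) ^ 2 else 0)

open MeasureTheory

/-- The two-dimensional basis function
`Φ_{(j_1,j_2)}(x_1,x_2) = (3/(2h²))[φ_{j_1}(x_1)ψ_{j_2}(x_2) + ψ_{j_1}(x_1)φ_{j_2}(x_2)]`. -/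
def Phi2 (L : ℝ) (J : ℕ) (j : ℕ × ℕ) : ℝ × ℝ → ℝ := fun x =>
  3 / (2 * (meshH L J) ^ 2) *
    (phiF L J j.1 x.1 * psiF L J j.2 x.2 + psiF L J j.1 x.1 * phiF L J j.2 x.2)

/-- The cell `D_{(i_1,i_2)} = (x_{i_1−1}, x_{i_1}] × (x_{i_2−1}, x_{i_2}]`. -/
def cell2 (L : ℝ) (J : ℕ) (i : ℕ × ℕ) : Set (ℝ × ℝ) :=
  Ioc (nodeX L J (i.1 - 1)) (nodeX L J i.1) ×ˢ Ioc (nodeX L J (i.2 - 1)) (nodeX L J i.2)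

/-- The open square `(−L,L)²`. -/
def sq2 (L : ℝ) : Set (ℝ × ℝ) := Ioo (-L) L ×ˢ Ioo (-L) L

/-- The Dirichlet eigenfunction `e_k(x_1,x_2) = sin(πk(x_1+L)/L)·sin(πk(x_2+L)/L)`. -/
def eK (L : ℝ) (k : ℕ) : ℝ × ℝ → ℝ := fun x =>
  Real.sin (Real.pi * k * (x.1 + L) / L) * Real.sin (Real.pi * k * (x.2 + L) / L)

/-- The corresponding eigenvalue `λ_k = 2(πk/L)²`. -/
def lamK (L : ℝ) (k : ℕ) : ℝ := 2 * (Real.pi * k / L) ^ 2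

/-- Coefficients `c_𝐣 = (8/(3h²))·λ_k⁻¹·(1/h²)∫_{D_𝐣} e_k` of the restriction `R_h e_k`. -/
def coefC (L : ℝ) (J : ℕ) (k : ℕ) (j : ℕ × ℕ) : ℝ :=
  8 / (3 * (meshH L J) ^ 2) * (lamK L k)⁻¹ * ((meshH L J) ^ 2)⁻¹ *
    ∫ y in cell2 L J j, eK L k y

/-- The restriction `R_h e_k = Σ_𝐣 c_𝐣 Φ_𝐣`. -/
def RhEk (L : ℝ) (J : ℕ) (k : ℕ) : ℝ × ℝ → ℝ := fun x =>
  ∑ j ∈ Finset.Icc 1 J ×ˢ Finset.Icc 1 J, coefC L J k j * Phi2 L J j x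

/-- The cellwise averaging operator `R̄_h` on the partition of `(−L,L)²` into the
cells `D_𝐢`. -/
def Rbar2 (L : ℝ) (J : ℕ) (v : ℝ × ℝ → ℝ) : ℝ × ℝ → ℝ := fun x =>
  ∑ i ∈ Finset.Icc 1 J ×ˢ Finset.Icc 1 J,
    Set.indicator (cell2 L J i)
      (fun _ => ((meshH L J) ^ 2)⁻¹ * ∫ y in cell2 L J i, v y) x

section Aux
open MeasureTheory
section Basic
variable {L : ℝ} {J : ℕ}

lemma meshH_pos (hL : 0 < L) (hJ : 0 < J) : 0 < meshH L J := by
  have : (0:ℝ) < J := by exact_mod_cast hJ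
  exact div_pos (by linarith) this

lemma nodeX_mono (hL : 0 < L) (hJ : 0 < J) {p q : ℕ} (hpq : p ≤ q) :
    nodeX L J p ≤ nodeX L J q := by
  have h := meshH_pos hL hJ
  have : (p:ℝ) ≤ q := by exact_mod_cast hpq
  unfold nodeX; nlinarith

lemma nodeX_lt (hL : 0 < L) (hJ : 0 < J) {p q : ℕ} (hpq : p < q) :
    nodeX L J p < nodeX L J q := by
  have h := meshH_pos hL hJ
  have : (p:ℝ) < q := by exact_mod_cast hpq
  unfold nodeX; nlinarith

lemma nodeX_sub (hl : 1 ≤ l) : nodeX L J l - nodeX L J (l-1) = meshH L J := by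
  have : ((l - 1 : ℕ) : ℝ) = (l:ℝ) - 1 := by
    have : (1:ℕ) ≤ l := hl
    push_cast [Nat.cast_sub this]; ring
  unfold nodeX; rw [this]; ring

lemma volume_cell (hL : 0 < L) (hJ : 0 < J) (hl : 1 ≤ l) :
    volume (Ioc (nodeX L J (l-1)) (nodeX L J l)) = ENNReal.ofReal (meshH L J) := by
  rw [Real.volume_Ioc, nodeX_sub hl]

/-- cells are disjoint for distinct indices -/
lemma cell_disjoint (hL : 0 < L) (hJ : 0 < J) {l r : ℕ} (hl : 1 ≤ l) (hr : 1 ≤ r)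
    (hlr : l ≠ r) {x : ℝ} (hx : x ∈ Ioc (nodeX L J (l-1)) (nodeX L J l)) :
    x ∉ Ioc (nodeX L J (r-1)) (nodeX L J r) := by
  intro hx'
  rcases Nat.lt_or_ge l r with hc | hc
  · have : l ≤ r - 1 := by omega
    have := nodeX_mono hL hJ (L := L) (J := J) this
    exact absurd hx'.1 (by linarith [hx.2])
  · have hc' : r < l := by omega
    have : r ≤ l - 1 := by omega
    have := nodeX_mono hL hJ (L := L) (J := J) this
    exact absurd hx.1 (by linarith [hx'.2])

/-- Integral over cell l of an indicator-type function supported on cell r. -/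
lemma cellInt_ioc (hL : 0 < L) (hJ : 0 < J) {l r : ℕ} (hl : 1 ≤ l) (hr : 1 ≤ r)
    (f : ℝ → ℝ) (hf : Continuous f) :
    ∫ x in Ioc (nodeX L J (l-1)) (nodeX L J l),
      (if x ∈ Ioc (nodeX L J (r-1)) (nodeX L J r) then f x else 0)
    = if l = r then ∫ x in (nodeX L J (l-1))..(nodeX L J l), f x else 0 := by
  by_cases hlr : l = r
  · subst hlr
    rw [if_pos rfl, intervalIntegral.integral_of_le
        (nodeX_mono hL hJ (by omega : l - 1 ≤ l))]
    refine setIntegral_congr_fun measurableSet_Ioc (fun x hx => if_pos hx)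
  · rw [if_neg hlr]
    have : EqOn (fun x => if x ∈ Ioc (nodeX L J (r-1)) (nodeX L J r) then f x else 0)
        (fun _ => (0:ℝ)) (Ioc (nodeX L J (l-1)) (nodeX L J l)) :=
      fun x hx => if_neg (cell_disjoint hL hJ hl hr hlr hx)
    rw [setIntegral_congr_fun measurableSet_Ioc this]; simp

lemma cellInt_icc (hL : 0 < L) (hJ : 0 < J) {l : ℕ} (hl : 1 ≤ l)
    (f : ℝ → ℝ) (hf : Continuous f) :
    ∫ x in Ioc (nodeX L J (l-1)) (nodeX L J l),
      (if x ∈ Icc (nodeX L J 0) (nodeX L J 1) then f x else 0)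
    = if l = 1 then ∫ x in (nodeX L J 0)..(nodeX L J 1), f x else 0 := by
  by_cases hlr : l = 1
  · subst hlr
    rw [if_pos rfl, intervalIntegral.integral_of_le (nodeX_mono hL hJ (by omega))]
    refine setIntegral_congr_fun measurableSet_Ioc (fun x hx => ?_)
    simp only [Nat.sub_self] at hx
    exact if_pos ⟨le_of_lt hx.1, hx.2⟩
  · rw [if_neg hlr]
    have : EqOn (fun x => if x ∈ Icc (nodeX L J 0) (nodeX L J 1) then f x else 0)
        (fun _ => (0:ℝ)) (Ioc (nodeX L J (l-1)) (nodeX L J l)) := by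
      intro x hx
      refine if_neg (fun hx' => ?_)
      have h1 : (1:ℕ) ≤ l - 1 := by omega
      have := nodeX_mono hL hJ (L := L) (J := J) h1
      exact absurd hx'.2 (by push_neg; linarith [hx.1])
    rw [setIntegral_congr_fun measurableSet_Ioc this]; simp

lemma cellInt_const (hL : 0 < L) (hJ : 0 < J) {l r : ℕ} (hl : 1 ≤ l) (hr : 1 ≤ r) (c : ℝ) :
    ∫ x in Ioc (nodeX L J (l-1)) (nodeX L J l),
      (if x ∈ Ioc (nodeX L J (r-1)) (nodeX L J r) then c else 0)
    = if l = r then c * meshH L J else 0 := by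
  rw [cellInt_ioc hL hJ hl hr _ continuous_const]
  by_cases hlr : l = r
  · subst hlr
    rw [if_pos rfl, if_pos rfl, intervalIntegral.integral_const, smul_eq_mul, nodeX_sub hl,
      mul_comm]
  · rw [if_neg hlr, if_neg hlr]

lemma cellInt_const_icc (hL : 0 < L) (hJ : 0 < J) {l : ℕ} (hl : 1 ≤ l) (c : ℝ) :
    ∫ x in Ioc (nodeX L J (l-1)) (nodeX L J l),
      (if x ∈ Icc (nodeX L J 0) (nodeX L J 1) then c else 0)
    = if l = 1 then c * meshH L J else 0 := by
  rw [cellInt_icc hL hJ hl _ continuous_const]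
  by_cases hlr : l = 1
  · subst hlr
    rw [if_pos rfl, if_pos rfl, intervalIntegral.integral_const, smul_eq_mul,
      show nodeX L J 1 - nodeX L J 0 = meshH L J from by
        simpa using nodeX_sub (L := L) (J := J) (l := 1) le_rfl, mul_comm]
  · rw [if_neg hlr, if_neg hlr]

end Basic

open Real


/-- FTC for a quadratic. -/
lemma integral_quad (A B C c u v : ℝ) :
    ∫ x in u..v, (A*(x-c)^2 + B*(x-c) + C)
      = A*((v-c)^3-(u-c)^3)/3 + B*((v-c)^2-(u-c)^2)/2 + C*(v-u) := by
  have h : ∀ x ∈ Set.uIcc u v,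
      HasDerivAt (fun x => A*(x-c)^3/3 + B*(x-c)^2/2 + C*x)
        (A*(x-c)^2 + B*(x-c) + C) x := by
    intro x _
    have h1 : HasDerivAt (fun x : ℝ => x - c) 1 x := (hasDerivAt_id x).sub_const c
    have h3 : HasDerivAt (fun x : ℝ => (x-c)^3) (3*(x-c)^2) x := by
      simpa using h1.fun_pow 3
    have h2 : HasDerivAt (fun x : ℝ => (x-c)^2) (2*(x-c)) x := by
      simpa using h1.fun_pow 2
    have := (((h3.const_mul A).div_const 3).add ((h2.const_mul B).div_const 2)).add
      ((hasDerivAt_id x).const_mul C)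
    exact this.congr_deriv (by ring)
  rw [intervalIntegral.integral_eq_sub_of_hasDerivAt h (by
    apply Continuous.intervalIntegrable; continuity)]
  ring

def aK (L : ℝ) (k : ℕ) : ℝ := Real.pi * k / L
def Sr (a θ t : ℝ) : ℝ := (Real.cos ((t-1)*θ) - Real.cos (t*θ))/a

lemma trig1 (a θ t : ℝ) : Sr a θ (t-1) + Sr a θ (t+1) = 2 * Real.cos θ * Sr a θ t := by
  unfold Sr
  have e1 : (t-1-1)*θ = (t-1)*θ - θ := by ring
  have e2 : (t+1-1)*θ = (t-1)*θ + θ := by ring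
  have e3 : (t+1)*θ = ((t-1)*θ + θ) + θ := by ring
  have e4 : t*θ = (t-1)*θ + θ := by ring
  rw [e1, e2, e3, e4, Real.cos_sub, Real.cos_add, Real.cos_add, Real.cos_add, Real.sin_add]
  have hp := Real.sin_sq_add_cos_sq θ
  linear_combination (Real.cos ((t-1)*θ) / a) * hp


lemma trig2 (a θ : ℝ) : Sr a θ 2 = (1 + 2*Real.cos θ) * Sr a θ 1 := by
  unfold Sr
  norm_num [Real.cos_two_mul]
  ring

lemma trig3 (a θ : ℝ) (J k : ℕ) (hJθ : (J:ℝ)*θ = k*(2*π)) :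
    Sr a θ ((J:ℝ)-1) = (1+2*Real.cos θ) * Sr a θ (J:ℝ) := by
  unfold Sr
  rw [show ((J:ℝ)-1-1)*θ = (k:ℝ)*(2*π) - 2*θ by linear_combination hJθ,
      show ((J:ℝ)-1)*θ = (k:ℝ)*(2*π) - θ by linear_combination hJθ,
      show (J:ℝ)*θ = (k:ℝ)*(2*π) - 0 by linear_combination hJθ,
      Real.cos_nat_mul_two_pi_sub, Real.cos_nat_mul_two_pi_sub, Real.cos_nat_mul_two_pi_sub,
      Real.cos_zero, Real.cos_two_mul]
  ring


def thetaK (L : ℝ) (J k : ℕ) : ℝ := aK L k * meshH L J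

lemma aK_pos {L : ℝ} {k : ℕ} (hL : 0 < L) (hk : 1 ≤ k) : 0 < aK L k := by
  have : (0:ℝ) < k := by exact_mod_cast hk
  exact div_pos (by positivity) hL

lemma nodeX_add_L (L : ℝ) (J l : ℕ) : nodeX L J l + L = l * meshH L J := by
  unfold nodeX; ring

lemma sine_cell_integral {L : ℝ} {J k : ℕ} (hL : 0 < L) (hk : 1 ≤ k) (hJ : 0 < J)
    {l : ℕ} (hl : 1 ≤ l) :
    ∫ x in Set.Ioc (nodeX L J (l-1)) (nodeX L J l), Real.sin (aK L k * (x + L))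
      = Sr (aK L k) (thetaK L J k) l := by
  have ha := aK_pos hL hk
  rw [← intervalIntegral.integral_of_le (nodeX_mono hL hJ (by omega : l - 1 ≤ l))]
  have : ∀ x : ℝ, Real.sin (aK L k * (x + L)) = Real.sin (aK L k * x + aK L k * L) := by
    intro x; ring_nf
  simp only [this]
  rw [intervalIntegral.integral_comp_mul_add Real.sin (ne_of_gt ha) (aK L k * L),
    integral_sin]
  have harg : ∀ p : ℕ, aK L k * nodeX L J p + aK L k * L = p * thetaK L J k := by
    intro p
    have := nodeX_add_L L J p
    unfold thetaK
    nlinarith [this]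
  rw [harg, harg]
  have hc : ((l - 1 : ℕ) : ℝ) = (l:ℝ) - 1 := by
    push_cast [Nat.cast_sub hl]; ring
  unfold Sr
  rw [hc]
  rw [smul_eq_mul]
  field_simp

open MeasureTheory in
lemma integOn_ind {s : Set ℝ} [DecidablePred (· ∈ s)] (hs : MeasurableSet s)
    {f : ℝ → ℝ} (hf : Continuous f) (u v : ℝ) :
    IntegrableOn (fun x => if x ∈ s then f x else 0) (Set.Ioc u v) volume := by
  have : (fun x => if x ∈ s then f x else 0) = s.indicator f := by
    ext x; simp [Set.indicator_apply]
  rw [this]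
  exact (hf.integrableOn_Ioc).indicator hs

def Pent (L : ℝ) (J : ℕ) (l j : ℕ) : ℝ :=
  ∫ x in Set.Ioc (nodeX L J (l-1)) (nodeX L J l), phiF L J j x

def Qent (L : ℝ) (J : ℕ) (l j : ℕ) : ℝ :=
  ∫ x in Set.Ioc (nodeX L J (l-1)) (nodeX L J l), psiF L J j x

lemma Pent_val {L : ℝ} {J : ℕ} (hL : 0 < L) (hJ : 2 ≤ J) {l j : ℕ} (hl : 1 ≤ l)
    (hj : 1 ≤ j) (hjJ : j ≤ J) :
    Pent L J l j =
      if j = 1 then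
        ((if l = 1 then (3:ℝ)/2 * meshH L J else 0) + (if l = 2 then -(1:ℝ)/2 * meshH L J else 0))
      else if j = J then
        ((if l = J-1 then -(1:ℝ)/2 * meshH L J else 0) + (if l = J then (3:ℝ)/2 * meshH L J else 0))
      else
        ((if l = j-1 then -(1:ℝ)/2 * meshH L J else 0) + (if l = j then (1:ℝ) * meshH L J else 0)
          + (if l = j+1 then -(1:ℝ)/2 * meshH L J else 0)) := by
  have hJ0 : 0 < J := by omega
  unfold Pent phiF
  by_cases hj1 : j = 1
  · subst hj1
    rw [if_pos rfl]
    simp only [reduceIte]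
    rw [integral_add (integOn_ind measurableSet_Icc continuous_const _ _)
        (integOn_ind measurableSet_Ioc continuous_const _ _)]
    rw [cellInt_const_icc hL hJ0 hl, cellInt_const hL hJ0 hl (r := 2) (by omega)]
  · rw [if_neg hj1]
    simp only [if_neg hj1]
    by_cases hjJe : j = J
    · subst hjJe
      simp only [reduceIte]
      rw [integral_add (integOn_ind measurableSet_Ioc continuous_const _ _)
          (integOn_ind measurableSet_Ioc continuous_const _ _)]
      rw [show j - 2 = j - 1 - 1 from by omega]
      rw [cellInt_const hL hJ0 hl (r := j - 1) (by omega),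
        cellInt_const hL hJ0 hl (r := j) (by omega)]
    · rw [if_neg hjJe]
      simp only [if_neg hjJe]
      have hj2 : 2 ≤ j := by omega
      have hI12 : MeasureTheory.IntegrableOn (fun x =>
          (if x ∈ Set.Ioc (nodeX L J (j-2)) (nodeX L J (j-1)) then -(1:ℝ)/2 else 0)
          + (if x ∈ Set.Ioc (nodeX L J (j-1)) (nodeX L J j) then (1:ℝ) else 0))
          (Set.Ioc (nodeX L J (l-1)) (nodeX L J l)) volume :=
        (integOn_ind measurableSet_Ioc continuous_const _ _).add
          (integOn_ind measurableSet_Ioc continuous_const _ _)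
      rw [integral_add hI12 (integOn_ind measurableSet_Ioc continuous_const _ _),
        integral_add (integOn_ind measurableSet_Ioc continuous_const _ _)
          (integOn_ind measurableSet_Ioc continuous_const _ _)]
      rw [show j - 2 = j - 1 - 1 from by omega]
      rw [cellInt_const hL hJ0 hl (r := j - 1) (by omega),
        cellInt_const hL hJ0 hl (r := j) (by omega)]
      have h3 := cellInt_const (L := L) (J := J) hL hJ0 hl (r := j + 1) (by omega) (-(1:ℝ)/2)
      simp only [Nat.add_sub_cancel] at h3
      rw [h3]

lemma Qent_val {L : ℝ} {J : ℕ} (hL : 0 < L) (hJ : 2 ≤ J) {l j : ℕ} (hl : 1 ≤ l)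
    (hj : 1 ≤ j) (hjJ : j ≤ J) :
    Qent L J l j =
      if j = 1 then
        ((if l = 1 then (meshH L J)^3/4 else 0) + (if l = 2 then (meshH L J)^3/12 else 0))
      else if j = J then
        ((if l = J-1 then (meshH L J)^3/12 else 0) + (if l = J then (meshH L J)^3/4 else 0))
      else
        ((if l = j-1 then (meshH L J)^3/12 else 0) + (if l = j then (meshH L J)^3/3 else 0)
          + (if l = j+1 then (meshH L J)^3/12 else 0)) := by
  have hJ0 : 0 < J := by omega
  unfold Qent psiF
  by_cases hj1 : j = 1
  · subst hj1
    rw [if_pos rfl]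
    simp only [reduceIte]
    rw [integral_add
        (integOn_ind measurableSet_Icc (by fun_prop) _ _)
        (integOn_ind measurableSet_Ioc (by fun_prop) _ _)]
    rw [cellInt_icc hL hJ0 hl _ (by fun_prop),
        cellInt_ioc hL hJ0 hl (r := 2) (by omega) _ (by fun_prop)]
    congr 1
    · by_cases hl1 : l = 1
      · subst hl1
        rw [if_pos rfl, if_pos rfl,
          intervalIntegral.integral_congr
            (g := fun x => (-(3:ℝ)/4)*(x - nodeX L J 0)^2 + (meshH L J)*(x - nodeX L J 0) + 0)
            (fun x _ => by ring), integral_quad]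
        have n1 : nodeX L J 1 = nodeX L J 0 + meshH L J := by
          have := nodeX_sub (L := L) (J := J) (l := 1) le_rfl
          norm_num at this; linarith
        rw [n1]; ring
      · simp [hl1]
    · by_cases hl2 : l = 2
      · subst hl2
        rw [if_pos rfl, if_pos rfl]
        norm_num
        rw [intervalIntegral.integral_congr
            (g := fun x => ((1:ℝ)/4)*(x - nodeX L J 1)^2 + (-(meshH L J/2))*(x - nodeX L J 1)
              + (meshH L J)^2/4)
            (fun x _ => by ring), integral_quad]
        have n2 : nodeX L J 2 = nodeX L J 1 + meshH L J := by
          have := nodeX_sub (L := L) (J := J) (l := 2) (by omega)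
          norm_num at this; linarith
        rw [n2]; ring
      · simp [hl2]
  · rw [if_neg hj1]
    simp only [if_neg hj1]
    by_cases hjJe : j = J
    · subst hjJe
      simp only [reduceIte]
      rw [integral_add
          (integOn_ind measurableSet_Ioc (by fun_prop) _ _)
          (integOn_ind measurableSet_Ioc (by fun_prop) _ _)]
      rw [show j - 2 = j - 1 - 1 from by omega]
      rw [cellInt_ioc hL hJ0 hl (r := j - 1) (by omega) _ (by fun_prop),
          cellInt_ioc hL hJ0 hl (r := j) (by omega) _ (by fun_prop)]
      congr 1
      · by_cases hlr : l = j - 1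
        · rw [if_pos hlr, if_pos hlr, hlr,
            intervalIntegral.integral_congr
              (g := fun x => ((1:ℝ)/4)*(x - nodeX L j (j-1))^2 + (meshH L j/2)*(x - nodeX L j (j-1))
                + (meshH L j)^2/4) (fun x _ => by ring), integral_quad]
          have nd : nodeX L j (j-1) = nodeX L j (j-1-1) + meshH L j := by
            have := nodeX_sub (L := L) (J := j) (l := j-1) (by omega)
            linarith
          rw [nd]; ring
        · simp [hlr]
      · by_cases hlr : l = j
        · rw [if_pos hlr, if_pos hlr, hlr,
            intervalIntegral.integral_congr
              (g := fun x => (-(3:ℝ)/4)*(x - nodeX L j j)^2 + (-(meshH L j))*(x - nodeX L j j) + 0)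
              (fun x _ => by ring), integral_quad]
          have nd : nodeX L j j = nodeX L j (j-1) + meshH L j := by
            have := nodeX_sub (L := L) (J := j) (l := j) (by omega)
            linarith
          rw [nd]; ring
        · simp [hlr]
    · rw [if_neg hjJe]
      simp only [if_neg hjJe]
      have hj2 : 2 ≤ j := by omega
      have hI12 : MeasureTheory.IntegrableOn (fun x =>
          (if x ∈ Set.Ioc (nodeX L J (j-2)) (nodeX L J (j-1)) then
            (1:ℝ)/4*(x - nodeX L J (j-2))^2 else 0)
          + (if x ∈ Set.Ioc (nodeX L J (j-1)) (nodeX L J j) then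
            -(1:ℝ)/2*(x - nodeX L J (j-1) - meshH L J/2)^2 + 3*(meshH L J)^2/8 else 0))
          (Set.Ioc (nodeX L J (l-1)) (nodeX L J l)) volume :=
        (integOn_ind measurableSet_Ioc (by fun_prop) _ _).add
          (integOn_ind measurableSet_Ioc (by fun_prop) _ _)
      rw [integral_add hI12 (integOn_ind measurableSet_Ioc (by fun_prop) _ _),
        integral_add (integOn_ind measurableSet_Ioc (by fun_prop) _ _)
          (integOn_ind measurableSet_Ioc (by fun_prop) _ _)]
      rw [show j - 2 = j - 1 - 1 from by omega]
      rw [cellInt_ioc hL hJ0 hl (r := j - 1) (by omega) _ (by fun_prop),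
          cellInt_ioc hL hJ0 hl (r := j) (by omega) _ (by fun_prop)]
      have h3 := cellInt_ioc (L := L) (J := J) hL hJ0 hl (r := j + 1) (by omega)
        (fun x => (1:ℝ)/4*(nodeX L J (j+1) - x)^2) (by fun_prop)
      simp only [Nat.add_sub_cancel] at h3
      rw [h3]
      congr 1
      congr 1
      · by_cases hlr : l = j - 1
        · rw [if_pos hlr, if_pos hlr, hlr,
            intervalIntegral.integral_congr
              (g := fun x => ((1:ℝ)/4)*(x - nodeX L J (j-1-1))^2 + 0*(x - nodeX L J (j-1-1)) + 0)
              (fun x _ => by ring), integral_quad]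
          have nd : nodeX L J (j-1) = nodeX L J (j-1-1) + meshH L J := by
            have := nodeX_sub (L := L) (J := J) (l := j-1) (by omega)
            linarith
          rw [nd]; ring
        · simp [hlr]
      · by_cases hlr : l = j
        · rw [if_pos hlr, if_pos hlr, hlr,
            intervalIntegral.integral_congr
              (g := fun x => (-(1:ℝ)/2)*(x - (nodeX L J (j-1) + meshH L J/2))^2
                + 0*(x - (nodeX L J (j-1) + meshH L J/2)) + 3*(meshH L J)^2/8)
              (fun x _ => by ring), integral_quad]
          have nd : nodeX L J j = nodeX L J (j-1) + meshH L J := by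
            have := nodeX_sub (L := L) (J := J) (l := j) (by omega)
            linarith
          rw [nd]; ring
        · simp [hlr]
      · by_cases hlr : l = j + 1
        · rw [if_pos hlr, if_pos hlr, hlr]
          have e1 : j + 1 - 1 = j := by omega
          rw [e1,
            intervalIntegral.integral_congr
              (g := fun x => ((1:ℝ)/4)*(x - nodeX L J (j+1))^2 + 0*(x - nodeX L J (j+1)) + 0)
              (fun x _ => by ring), integral_quad]
          have nd : nodeX L J (j+1) = nodeX L J j + meshH L J := by
            have := nodeX_sub (L := L) (J := J) (l := j+1) (by omega)
            simp only [Nat.add_sub_cancel] at this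
            linarith
          rw [nd]; ring
        · simp [hlr]

set_option maxHeartbeats 1000000 in
lemma row_sum {J : ℕ} (hJ : 4 ≤ J) {l : ℕ} (hl : 1 ≤ l) (hlJ : l ≤ J)
    (S : ℕ → ℝ) (E : ℕ → ℕ → ℝ) (v d o : ℝ)
    (hE : ∀ j, 1 ≤ j → j ≤ J → E l j =
      if j = 1 then ((if l = 1 then v else 0) + (if l = 2 then o else 0))
      else if j = J then ((if l = J-1 then o else 0) + (if l = J then v else 0))
      else ((if l = j-1 then o else 0) + (if l = j then d else 0)
        + (if l = j+1 then o else 0))) :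
    ∑ j ∈ Finset.Icc 1 J, S j * E l j =
      if l = 1 then S 1 * v + S 2 * o
      else if l = J then S (J-1) * o + S J * v
      else S (l-1) * o + S l * d + S (l+1) * o := by
  by_cases hl1 : l = 1
  · rw [if_pos hl1]
    rw [← Finset.sum_subset (s₁ := ({1, 2} : Finset ℕ))
      (by intro x hx; simp only [Finset.mem_insert, Finset.mem_singleton] at hx
          simp only [Finset.mem_Icc]; omega)
      (fun j hj hj' => ?_)]
    · rw [Finset.sum_insert (by simp only [Finset.mem_singleton]; omega),
        Finset.sum_singleton]
      rw [hE 1 (by omega) (by omega), hE 2 (by omega) (by omega)]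
      split_ifs <;> (first | (exfalso; omega) | ring)
    · simp only [Finset.mem_Icc] at hj
      simp only [Finset.mem_insert, Finset.mem_singleton] at hj'
      push_neg at hj'
      rw [hE j hj.1 hj.2]
      split_ifs <;> (first | (exfalso; omega) | ring)
  · by_cases hlJe : l = J
    · rw [if_neg hl1, if_pos hlJe]
      rw [← Finset.sum_subset (s₁ := ({J - 1, J} : Finset ℕ))
        (by intro x hx; simp only [Finset.mem_insert, Finset.mem_singleton] at hx
            simp only [Finset.mem_Icc]; omega)
        (fun j hj hj' => ?_)]
      · rw [Finset.sum_insert (by simp only [Finset.mem_singleton]; omega),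
          Finset.sum_singleton]
        rw [hE (J-1) (by omega) (by omega), hE J (by omega) (by omega)]
        split_ifs <;> (first | (exfalso; omega) | ring)
      · simp only [Finset.mem_Icc] at hj
        simp only [Finset.mem_insert, Finset.mem_singleton] at hj'
        push_neg at hj'
        rw [hE j hj.1 hj.2]
        split_ifs <;> (first | (exfalso; omega) | ring)
    · rw [if_neg hl1, if_neg hlJe]
      rw [← Finset.sum_subset (s₁ := ({l - 1, l, l + 1} : Finset ℕ))
        (by intro x hx
            simp only [Finset.mem_insert, Finset.mem_singleton] at hx
            simp only [Finset.mem_Icc]; omega)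
        (fun j hj hj' => ?_)]
      · rw [Finset.sum_insert
            (by simp only [Finset.mem_insert, Finset.mem_singleton]; omega),
          Finset.sum_insert (by simp only [Finset.mem_singleton]; omega),
          Finset.sum_singleton]
        rw [hE (l-1) (by omega) (by omega), hE l (by omega) (by omega),
          hE (l+1) (by omega) (by omega)]
        split_ifs <;> (first | (exfalso; omega) | ring)
      · simp only [Finset.mem_Icc] at hj
        simp only [Finset.mem_insert, Finset.mem_singleton] at hj'
        push_neg at hj'
        rw [hE j hj.1 hj.2]
        split_ifs <;> (first | (exfalso; omega) | ring)

lemma Jtheta {L : ℝ} {J k : ℕ} (hL : 0 < L) (hJ0 : 0 < J) :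
    (J:ℝ) * thetaK L J k = k * (2*π) := by
  have hJ : (J:ℝ) ≠ 0 := by positivity
  have hL' : L ≠ 0 := ne_of_gt hL
  unfold thetaK aK meshH
  field_simp

lemma alpha_row {L : ℝ} {J k : ℕ} (hL : 0 < L) (hk : 1 ≤ k) (hJ : 4 ≤ J)
    {l : ℕ} (hl : 1 ≤ l) (hlJ : l ≤ J) :
    ∑ j ∈ Finset.Icc 1 J, Sr (aK L k) (thetaK L J k) j * Pent L J l j
      = meshH L J * (1 - Real.cos (thetaK L J k)) * Sr (aK L k) (thetaK L J k) l := by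
  rw [row_sum hJ hl hlJ _ (Pent L J) ((3:ℝ)/2 * meshH L J) ((1:ℝ) * meshH L J)
    (-(1:ℝ)/2 * meshH L J) (fun j hj hjJ' => Pent_val hL (by omega) hl hj hjJ')]
  by_cases hl1 : l = 1
  · rw [if_pos hl1, hl1]
    have t2 := trig2 (aK L k) (thetaK L J k)
    push_cast
    linear_combination (-(1:ℝ)/2 * meshH L J) * t2
  · by_cases hlJe : l = J
    · rw [if_neg hl1, if_pos hlJe, hlJe]
      have t3 := trig3 (aK L k) (thetaK L J k) J k (Jtheta hL (by omega))
      have hc : ((J - 1 : ℕ) : ℝ) = (J:ℝ) - 1 := by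
        push_cast [Nat.cast_sub (by omega : 1 ≤ J)]; ring
      rw [hc]
      linear_combination (-(1:ℝ)/2 * meshH L J) * t3
    · rw [if_neg hl1, if_neg hlJe]
      have t1 := trig1 (aK L k) (thetaK L J k) (l:ℝ)
      have hc : ((l - 1 : ℕ) : ℝ) = (l:ℝ) - 1 := by
        push_cast [Nat.cast_sub hl]; ring
      rw [hc]
      push_cast
      linear_combination (-(1:ℝ)/2 * meshH L J) * t1

lemma beta_row {L : ℝ} {J k : ℕ} (hL : 0 < L) (hk : 1 ≤ k) (hJ : 4 ≤ J)
    {l : ℕ} (hl : 1 ≤ l) (hlJ : l ≤ J) :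
    ∑ j ∈ Finset.Icc 1 J, Sr (aK L k) (thetaK L J k) j * Qent L J l j
      = (meshH L J)^3 * (4 + 2*Real.cos (thetaK L J k))/12 * Sr (aK L k) (thetaK L J k) l := by
  rw [row_sum hJ hl hlJ _ (Qent L J) ((meshH L J)^3/4) ((meshH L J)^3/3)
    ((meshH L J)^3/12) (fun j hj hjJ' => Qent_val hL (by omega) hl hj hjJ')]
  by_cases hl1 : l = 1
  · rw [if_pos hl1, hl1]
    have t2 := trig2 (aK L k) (thetaK L J k)
    push_cast
    linear_combination ((meshH L J)^3/12) * t2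
  · by_cases hlJe : l = J
    · rw [if_neg hl1, if_pos hlJe, hlJe]
      have t3 := trig3 (aK L k) (thetaK L J k) J k (Jtheta hL (by omega))
      have hc : ((J - 1 : ℕ) : ℝ) = (J:ℝ) - 1 := by
        push_cast [Nat.cast_sub (by omega : 1 ≤ J)]; ring
      rw [hc]
      linear_combination ((meshH L J)^3/12) * t3
    · rw [if_neg hl1, if_neg hlJe]
      have t1 := trig1 (aK L k) (thetaK L J k) (l:ℝ)
      have hc : ((l - 1 : ℕ) : ℝ) = (l:ℝ) - 1 := by
        push_cast [Nat.cast_sub hl]; ring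
      rw [hc]
      push_cast
      linear_combination ((meshH L J)^3/12) * t1

open MeasureTheory

/-- Step A: cell integral of eK. -/
lemma eK_cell_integral {L : ℝ} {J k : ℕ} (hL : 0 < L) (hk : 1 ≤ k) (hJ0 : 0 < J)
    {i : ℕ × ℕ} (hi1 : 1 ≤ i.1) (hi2 : 1 ≤ i.2) :
    ∫ y in cell2 L J i, eK L k y
      = Sr (aK L k) (thetaK L J k) i.1 * Sr (aK L k) (thetaK L J k) i.2 := by
  have harg : ∀ x : ℝ, Real.pi * k * (x + L) / L = aK L k * (x + L) := by
    intro x; unfold aK; ring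
  unfold cell2 eK
  simp only [harg]
  rw [MeasureTheory.Measure.volume_eq_prod,
    setIntegral_prod_mul (fun x : ℝ => Real.sin (aK L k * (x + L)))
      (fun x : ℝ => Real.sin (aK L k * (x + L))) _ _,
    sine_cell_integral hL hk hJ0 hi1, sine_cell_integral hL hk hJ0 hi2]

lemma phiF_integrableOn {L : ℝ} {J : ℕ} (j : ℕ) (u v : ℝ) :
    IntegrableOn (phiF L J j) (Set.Ioc u v) volume := by
  unfold phiF
  by_cases hj1 : j = 1
  · simp only [if_pos hj1]
    exact (integOn_ind measurableSet_Icc continuous_const _ _).add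
      (integOn_ind measurableSet_Ioc continuous_const _ _)
  · simp only [if_neg hj1]
    by_cases hjJ : j = J
    · simp only [if_pos hjJ]
      exact (integOn_ind measurableSet_Ioc continuous_const _ _).add
        (integOn_ind measurableSet_Ioc continuous_const _ _)
    · simp only [if_neg hjJ]
      exact ((integOn_ind measurableSet_Ioc continuous_const _ _).add
        (integOn_ind measurableSet_Ioc continuous_const _ _)).add
        (integOn_ind measurableSet_Ioc continuous_const _ _)

lemma psiF_integrableOn {L : ℝ} {J : ℕ} (j : ℕ) (u v : ℝ) :
    IntegrableOn (psiF L J j) (Set.Ioc u v) volume := by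
  unfold psiF
  by_cases hj1 : j = 1
  · simp only [if_pos hj1]
    exact (integOn_ind measurableSet_Icc (by fun_prop) _ _).add
      (integOn_ind measurableSet_Ioc (by fun_prop) _ _)
  · simp only [if_neg hj1]
    by_cases hjJ : j = J
    · simp only [if_pos hjJ]
      exact (integOn_ind measurableSet_Ioc (by fun_prop) _ _).add
        (integOn_ind measurableSet_Ioc (by fun_prop) _ _)
    · simp only [if_neg hjJ]
      exact ((integOn_ind measurableSet_Ioc (by fun_prop) _ _).add
        (integOn_ind measurableSet_Ioc (by fun_prop) _ _)).add
        (integOn_ind measurableSet_Ioc (by fun_prop) _ _)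

/-- Step B: cell integral of Phi2. -/
lemma Phi2_cell_integral {L : ℝ} {J : ℕ} (i j : ℕ × ℕ) :
    ∫ y in cell2 L J i, Phi2 L J j y
      = 3 / (2 * (meshH L J) ^ 2) *
        (Pent L J i.1 j.1 * Qent L J i.2 j.2 + Qent L J i.1 j.1 * Pent L J i.2 j.2) := by
  unfold Phi2 cell2
  rw [MeasureTheory.Measure.volume_eq_prod]
  rw [integral_const_mul]
  have hint1 : Integrable (fun y : ℝ × ℝ => phiF L J j.1 y.1 * psiF L J j.2 y.2)
      ((volume.restrict (Set.Ioc (nodeX L J (i.1-1)) (nodeX L J i.1))).prod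
       (volume.restrict (Set.Ioc (nodeX L J (i.2-1)) (nodeX L J i.2)))) :=
    Integrable.mul_prod (phiF_integrableOn _ _ _) (psiF_integrableOn _ _ _)
  have hint2 : Integrable (fun y : ℝ × ℝ => psiF L J j.1 y.1 * phiF L J j.2 y.2)
      ((volume.restrict (Set.Ioc (nodeX L J (i.1-1)) (nodeX L J i.1))).prod
       (volume.restrict (Set.Ioc (nodeX L J (i.2-1)) (nodeX L J i.2)))) :=
    Integrable.mul_prod (psiF_integrableOn _ _ _) (phiF_integrableOn _ _ _)
  rw [← MeasureTheory.Measure.prod_restrict] at *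
  rw [integral_add hint1 hint2,
    integral_prod_mul (f := fun x : ℝ => phiF L J j.1 x) (g := fun x : ℝ => psiF L J j.2 x),
    integral_prod_mul (f := fun x : ℝ => psiF L J j.1 x) (g := fun x : ℝ => phiF L J j.2 x)]
  rfl

lemma Phi2_integrableOn {L : ℝ} {J : ℕ} (i j : ℕ × ℕ) :
    IntegrableOn (Phi2 L J j) (cell2 L J i) volume := by
  unfold Phi2 cell2
  rw [IntegrableOn, MeasureTheory.Measure.volume_eq_prod, ← Measure.prod_restrict]
  exact ((Integrable.mul_prod (phiF_integrableOn _ _ _) (psiF_integrableOn _ _ _)).add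
    (Integrable.mul_prod (psiF_integrableOn _ _ _) (phiF_integrableOn _ _ _))).const_mul _

def muJ (L : ℝ) (J k : ℕ) : ℝ :=
  (1 - Real.cos (thetaK L J k)) * (4 + 2*Real.cos (thetaK L J k)) / (3 * (thetaK L J k)^2)

lemma lamK_eq {L : ℝ} {k : ℕ} : lamK L k = 2 * (aK L k)^2 := rfl

lemma main_identity {L : ℝ} {J k : ℕ} (hL : 0 < L) (hk : 1 ≤ k) (hJ : 4 ≤ J)
    {i : ℕ × ℕ} (hi1 : 1 ≤ i.1) (hi1J : i.1 ≤ J) (hi2 : 1 ≤ i.2) (hi2J : i.2 ≤ J) :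
    ∫ y in cell2 L J i, RhEk L J k y
      = muJ L J k * (Sr (aK L k) (thetaK L J k) i.1 * Sr (aK L k) (thetaK L J k) i.2) := by
  have hJ0 : 0 < J := by omega
  have hh := meshH_pos hL hJ0
  have ha := aK_pos hL hk
  set a := aK L k
  set θ := thetaK L J k with hθdef
  set h := meshH L J with hhdef
  set S : ℕ → ℝ := fun j => Sr a θ (j:ℝ) with hS
  set K : ℝ := 8 / (3 * h^2) * (lamK L k)⁻¹ * (h^2)⁻¹ * (3 / (2 * h^2)) with hK
  unfold RhEk
  rw [integral_finset_sum _ (fun j _ => (Phi2_integrableOn i j).const_mul _)]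
  have term_eq : ∀ j ∈ Finset.Icc 1 J ×ˢ Finset.Icc 1 J,
      (∫ y in cell2 L J i, coefC L J k j * Phi2 L J j y)
        = K * ((S j.1 * Pent L J i.1 j.1) * (S j.2 * Qent L J i.2 j.2)
             + (S j.1 * Qent L J i.1 j.1) * (S j.2 * Pent L J i.2 j.2)) := by
    intro j hj
    simp only [Finset.mem_product, Finset.mem_Icc] at hj
    rw [integral_const_mul, Phi2_cell_integral]
    unfold coefC
    rw [eK_cell_integral hL hk hJ0 hj.1.1 hj.2.1]
    rw [hK, hS]
    ring
  rw [Finset.sum_congr rfl term_eq]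
  rw [Finset.sum_product]
  have inner_eq : ∀ j1 : ℕ,
      (∑ j2 ∈ Finset.Icc 1 J, K * ((S j1 * Pent L J i.1 j1) * (S j2 * Qent L J i.2 j2)
        + (S j1 * Qent L J i.1 j1) * (S j2 * Pent L J i.2 j2)))
      = K * ((S j1 * Pent L J i.1 j1) * (∑ j2 ∈ Finset.Icc 1 J, S j2 * Qent L J i.2 j2)
           + (S j1 * Qent L J i.1 j1) * (∑ j2 ∈ Finset.Icc 1 J, S j2 * Pent L J i.2 j2)) := by
    intro j1
    rw [← Finset.mul_sum]
    congr 1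
    rw [Finset.sum_add_distrib, ← Finset.mul_sum, ← Finset.mul_sum]
  rw [Finset.sum_congr rfl (fun j1 _ => inner_eq j1)]
  have outer_eq :
      (∑ j1 ∈ Finset.Icc 1 J, K * ((S j1 * Pent L J i.1 j1)
          * (∑ j2 ∈ Finset.Icc 1 J, S j2 * Qent L J i.2 j2)
        + (S j1 * Qent L J i.1 j1) * (∑ j2 ∈ Finset.Icc 1 J, S j2 * Pent L J i.2 j2)))
      = K * ((∑ j1 ∈ Finset.Icc 1 J, S j1 * Pent L J i.1 j1)
              * (∑ j2 ∈ Finset.Icc 1 J, S j2 * Qent L J i.2 j2)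
           + (∑ j1 ∈ Finset.Icc 1 J, S j1 * Qent L J i.1 j1)
              * (∑ j2 ∈ Finset.Icc 1 J, S j2 * Pent L J i.2 j2)) := by
    rw [← Finset.mul_sum]
    congr 1
    rw [Finset.sum_add_distrib, ← Finset.sum_mul, ← Finset.sum_mul]
  rw [outer_eq]
  rw [alpha_row hL hk hJ hi1 hi1J, alpha_row hL hk hJ hi2 hi2J,
    beta_row hL hk hJ hi1 hi1J, beta_row hL hk hJ hi2 hi2J]
  rw [hK, lamK_eq]
  unfold muJ
  rw [← hθdef]
  have ha' : a ≠ 0 := ne_of_gt ha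
  have hh' : h ≠ 0 := ne_of_gt hh
  have hrel : θ = a * h := rfl
  rw [hrel]
  simp only [a, h] at *
  field_simp
  ring

/-- Step C: evaluation of the averaging operator on a cell. -/
lemma Rbar2_eval {L : ℝ} {J : ℕ} (hL : 0 < L) (hJ0 : 0 < J) {i : ℕ × ℕ}
    (hi1 : 1 ≤ i.1) (hi1J : i.1 ≤ J) (hi2 : 1 ≤ i.2) (hi2J : i.2 ≤ J)
    {x : ℝ × ℝ} (hx : x ∈ cell2 L J i) (v : ℝ × ℝ → ℝ) :
    Rbar2 L J v x = ((meshH L J)^2)⁻¹ * ∫ y in cell2 L J i, v y := by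
  unfold Rbar2
  rw [Finset.sum_eq_single_of_mem i
    (by simp only [Finset.mem_product, Finset.mem_Icc]; omega)
    (fun i' hi' hne => ?_), Set.indicator_of_mem hx]
  apply Set.indicator_of_notMem
  intro hx'
  simp only [Finset.mem_product, Finset.mem_Icc] at hi'
  have hc : i'.1 ≠ i.1 ∨ i'.2 ≠ i.2 := by
    by_contra hcon; push_neg at hcon; exact hne (Prod.ext hcon.1 hcon.2)
  rcases hc with hne1 | hne2
  · exact cell_disjoint hL hJ0 hi1 hi'.1.1 (fun e => hne1 e.symm) hx.1 hx'.1
  · exact cell_disjoint hL hJ0 hi2 hi'.2.1 (fun e => hne2 e.symm) hx.2 hx'.2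

/-- Every point of `(−L,L)` lies in some cell. -/
lemma exists_cell {L : ℝ} {J : ℕ} (hL : 0 < L) (hJ0 : 0 < J) {x : ℝ}
    (hx : x ∈ Set.Ioo (-L) L) :
    ∃ l : ℕ, 1 ≤ l ∧ l ≤ J ∧ x ∈ Set.Ioc (nodeX L J (l-1)) (nodeX L J l) := by
  have hh := meshH_pos hL hJ0
  set t := (x + L) / meshH L J with ht
  have ht0 : 0 < t := div_pos (by linarith [hx.1]) hh
  have hth : t * meshH L J = x + L := by rw [ht]; field_simp
  have hJh : (J:ℝ) * meshH L J = 2*L := by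
    have : (J:ℝ) ≠ 0 := by positivity
    unfold meshH; field_simp
  refine ⟨⌈t⌉₊, Nat.ceil_pos.mpr ht0, ?_, ?_, ?_⟩
  · rw [Nat.ceil_le]
    rw [div_le_iff₀ hh]
    nlinarith [hx.2]
  · have hcast : ((⌈t⌉₊ - 1 : ℕ) : ℝ) = (⌈t⌉₊ : ℝ) - 1 := by
      have h1 : 1 ≤ ⌈t⌉₊ := Nat.ceil_pos.mpr ht0
      push_cast [Nat.cast_sub h1]; ring
    have hlt : (⌈t⌉₊ : ℝ) - 1 < t := by
      have := Nat.ceil_lt_add_one (le_of_lt ht0)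
      linarith
    unfold nodeX
    rw [hcast]
    nlinarith [hlt, hh]
  · have hle : t ≤ (⌈t⌉₊ : ℝ) := Nat.le_ceil t
    unfold nodeX
    nlinarith [hle, hh]

lemma abs_sin_sub (p q : ℝ) : |Real.sin p - Real.sin q| ≤ |p - q| := by
  rw [Real.sin_sub_sin, abs_mul, abs_mul]
  calc |2| * |Real.sin ((p - q)/2)| * |Real.cos ((p + q)/2)|
      ≤ |2| * |(p - q)/2| * 1 := by
        apply mul_le_mul
        · apply mul_le_mul_of_nonneg_left Real.abs_sin_le_abs (abs_nonneg 2)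
        · exact Real.abs_cos_le_one _
        · exact abs_nonneg _
        · positivity
    _ = |p - q| := by
        rw [abs_div, abs_two]
        ring

lemma eK_integrableOn {L : ℝ} {J k : ℕ} (i : ℕ × ℕ) :
    IntegrableOn (eK L k) (cell2 L J i) volume := by
  unfold eK cell2
  rw [IntegrableOn, MeasureTheory.Measure.volume_eq_prod, ← Measure.prod_restrict]
  exact Integrable.mul_prod
    (Continuous.integrableOn_Ioc
      (by fun_prop : Continuous fun x : ℝ => Real.sin (Real.pi * k * (x + L) / L)))
    (Continuous.integrableOn_Ioc
      (by fun_prop : Continuous fun x : ℝ => Real.sin (Real.pi * k * (x + L) / L)))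

lemma volume_cell2 {L : ℝ} {J : ℕ} (hL : 0 < L) (hJ0 : 0 < J) {i : ℕ × ℕ}
    (hi1 : 1 ≤ i.1) (hi2 : 1 ≤ i.2) :
    volume (cell2 L J i) = ENNReal.ofReal (meshH L J) * ENNReal.ofReal (meshH L J) := by
  unfold cell2
  rw [MeasureTheory.Measure.volume_eq_prod, Measure.prod_prod,
    volume_cell hL hJ0 hi1, volume_cell hL hJ0 hi2]

lemma eK_continuous {L : ℝ} {k : ℕ} : Continuous (eK L k) := by
  unfold eK; fun_prop

lemma abs_eK_le_one {L : ℝ} {k : ℕ} (y : ℝ × ℝ) : |eK L k y| ≤ 1 := by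
  unfold eK
  rw [abs_mul]
  exact mul_le_one₀ (abs_le.mpr ⟨Real.neg_one_le_sin _, Real.sin_le_one _⟩)
    (abs_nonneg _) (abs_le.mpr ⟨Real.neg_one_le_sin _, Real.sin_le_one _⟩)

lemma pointwise_bound {L : ℝ} {J k : ℕ} (hL : 0 < L) (hk : 1 ≤ k) (hJ : 4 ≤ J)
    {x : ℝ × ℝ} (hx : x ∈ sq2 L) :
    |eK L k x - Rbar2 L J (RhEk L J k) x|
      ≤ 2 * aK L k * meshH L J + |1 - muJ L J k| := by
  have hJ0 : 0 < J := by omega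
  have hh := meshH_pos hL hJ0
  have ha := aK_pos hL hk
  obtain ⟨l1, h11, h1J, hm1⟩ := exists_cell hL hJ0 hx.1
  obtain ⟨l2, h21, h2J, hm2⟩ := exists_cell hL hJ0 hx.2
  have hxc : x ∈ cell2 L J (l1, l2) := ⟨hm1, hm2⟩
  rw [Rbar2_eval hL hJ0 h11 h1J h21 h2J hxc,
    main_identity hL hk hJ (i := (l1,l2)) h11 h1J h21 h2J]
  have hvol : volume (cell2 L J (l1, l2)) = ENNReal.ofReal (meshH L J) * ENNReal.ofReal (meshH L J) :=
    volume_cell2 hL hJ0 h11 h21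
  have hvollt : volume (cell2 L J (l1, l2)) < ⊤ := by
    rw [hvol]; exact ENNReal.mul_lt_top ENNReal.ofReal_lt_top ENNReal.ofReal_lt_top
  have hvolto : (volume (cell2 L J (l1, l2))).toReal = meshH L J * meshH L J := by
    rw [hvol, ENNReal.toReal_mul, ENNReal.toReal_ofReal hh.le]
  have hEint : Sr (aK L k) (thetaK L J k) l1 * Sr (aK L k) (thetaK L J k) l2
      = ∫ y in cell2 L J (l1,l2), eK L k y :=
    (eK_cell_integral hL hk hJ0 (i := (l1,l2)) h11 h21).symm
  set ebar := ((meshH L J)^2)⁻¹ * (Sr (aK L k) (thetaK L J k) l1 * Sr (aK L k) (thetaK L J k) l2)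
    with hebar
  have key2 : |ebar| ≤ 1 := by
    rw [hebar, hEint, abs_mul, abs_of_nonneg (by positivity : (0:ℝ) ≤ ((meshH L J)^2)⁻¹)]
    have hb := norm_setIntegral_le_of_norm_le_const (f := eK L k) (C := 1) hvollt
      (fun y _ => by rw [Real.norm_eq_abs]; exact abs_eK_le_one (L := L) (k := k) y)
    rw [Real.norm_eq_abs, measureReal_def, hvolto] at hb
    calc ((meshH L J)^2)⁻¹ * |∫ y in cell2 L J (l1,l2), eK L k y|
        ≤ ((meshH L J)^2)⁻¹ * (1 * (meshH L J * meshH L J)) := by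
          apply mul_le_mul_of_nonneg_left hb (by positivity)
      _ = 1 := by field_simp
  have lipbound : ∀ y ∈ cell2 L J (l1,l2), |eK L k x - eK L k y| ≤ 2 * aK L k * meshH L J := by
    intro y hy
    have hd1 : |x.1 - y.1| ≤ meshH L J := by
      have hnd := nodeX_sub (L := L) (J := J) h11
      have := hm1.1; have := hm1.2
      have := hy.1.1; have := hy.1.2
      rw [abs_le]; constructor <;> linarith
    have hd2 : |x.2 - y.2| ≤ meshH L J := by
      have hnd := nodeX_sub (L := L) (J := J) h21
      have := hm2.1; have := hm2.2
      have := hy.2.1; have := hy.2.2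
      rw [abs_le]; constructor <;> linarith
    have harg : ∀ u v : ℝ, Real.pi * k * (u + L) / L - Real.pi * k * (v + L) / L
        = aK L k * (u - v) := by intro u v; unfold aK; ring
    have hs1 : |Real.sin (Real.pi * k * (x.1 + L) / L) - Real.sin (Real.pi * k * (y.1 + L) / L)|
        ≤ aK L k * meshH L J := by
      calc _ ≤ |Real.pi * k * (x.1 + L) / L - Real.pi * k * (y.1 + L) / L| := abs_sin_sub _ _
        _ = aK L k * |x.1 - y.1| := by rw [harg, abs_mul, abs_of_nonneg ha.le]
        _ ≤ aK L k * meshH L J := mul_le_mul_of_nonneg_left hd1 ha.le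
    have hs2 : |Real.sin (Real.pi * k * (x.2 + L) / L) - Real.sin (Real.pi * k * (y.2 + L) / L)|
        ≤ aK L k * meshH L J := by
      calc _ ≤ |Real.pi * k * (x.2 + L) / L - Real.pi * k * (y.2 + L) / L| := abs_sin_sub _ _
        _ = aK L k * |x.2 - y.2| := by rw [harg, abs_mul, abs_of_nonneg ha.le]
        _ ≤ aK L k * meshH L J := mul_le_mul_of_nonneg_left hd2 ha.le
    have hb1 : |Real.sin (Real.pi * k * (x.1 + L) / L)| ≤ 1 :=
      abs_le.mpr ⟨Real.neg_one_le_sin _, Real.sin_le_one _⟩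
    have hb2 : |Real.sin (Real.pi * k * (y.2 + L) / L)| ≤ 1 :=
      abs_le.mpr ⟨Real.neg_one_le_sin _, Real.sin_le_one _⟩
    unfold eK
    calc |Real.sin (Real.pi * k * (x.1 + L) / L) * Real.sin (Real.pi * k * (x.2 + L) / L)
          - Real.sin (Real.pi * k * (y.1 + L) / L) * Real.sin (Real.pi * k * (y.2 + L) / L)|
        = |Real.sin (Real.pi * k * (x.1 + L) / L)
            * (Real.sin (Real.pi * k * (x.2 + L) / L) - Real.sin (Real.pi * k * (y.2 + L) / L))
          + (Real.sin (Real.pi * k * (x.1 + L) / L) - Real.sin (Real.pi * k * (y.1 + L) / L))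
            * Real.sin (Real.pi * k * (y.2 + L) / L)| := by congr 1; ring
      _ ≤ |Real.sin (Real.pi * k * (x.1 + L) / L)
            * (Real.sin (Real.pi * k * (x.2 + L) / L) - Real.sin (Real.pi * k * (y.2 + L) / L))|
          + |(Real.sin (Real.pi * k * (x.1 + L) / L) - Real.sin (Real.pi * k * (y.1 + L) / L))
            * Real.sin (Real.pi * k * (y.2 + L) / L)| := abs_add_le _ _
      _ ≤ 1 * (aK L k * meshH L J) + (aK L k * meshH L J) * 1 := by
          rw [abs_mul, abs_mul]
          gcongr
      _ = 2 * aK L k * meshH L J := by ring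
  have key1 : |eK L k x - ebar| ≤ 2 * aK L k * meshH L J := by
    have hint : IntegrableOn (eK L k) (cell2 L J (l1,l2)) volume := eK_integrableOn _
    have hintc : IntegrableOn (fun _ : ℝ × ℝ => eK L k x) (cell2 L J (l1,l2)) volume :=
      integrableOn_const hvollt.ne
    have hrepr : eK L k x - ebar
        = ((meshH L J)^2)⁻¹ * ∫ y in cell2 L J (l1,l2), (eK L k x - eK L k y) := by
      rw [integral_sub hintc hint, setIntegral_const, measureReal_def, hvolto, smul_eq_mul, hebar, hEint]
      have : meshH L J ≠ 0 := ne_of_gt hh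
      field_simp
    rw [hrepr]
    have hb := norm_setIntegral_le_of_norm_le_const
      (f := fun y => eK L k x - eK L k y) (C := 2 * aK L k * meshH L J) hvollt
      (fun y hy => by rw [Real.norm_eq_abs]; exact lipbound y hy)
    rw [Real.norm_eq_abs, measureReal_def, hvolto] at hb
    rw [abs_mul, abs_of_nonneg (by positivity : (0:ℝ) ≤ ((meshH L J)^2)⁻¹)]
    calc ((meshH L J)^2)⁻¹ * |∫ y in cell2 L J (l1,l2), (eK L k x - eK L k y)|
        ≤ ((meshH L J)^2)⁻¹ * (2 * aK L k * meshH L J * (meshH L J * meshH L J)) := by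
          apply mul_le_mul_of_nonneg_left hb (by positivity)
      _ = 2 * aK L k * meshH L J := by field_simp
  have hassoc : ((meshH L J)^2)⁻¹ * (muJ L J k * (Sr (aK L k) (thetaK L J k) l1
      * Sr (aK L k) (thetaK L J k) l2)) = muJ L J k * ebar := by
    rw [hebar]; ring
  rw [hassoc]
  calc |eK L k x - muJ L J k * ebar|
      = |(eK L k x - ebar) + (1 - muJ L J k) * ebar| := by congr 1; ring
    _ ≤ |eK L k x - ebar| + |(1 - muJ L J k) * ebar| := abs_add_le _ _
    _ ≤ 2 * aK L k * meshH L J + |1 - muJ L J k| := by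
        apply add_le_add key1
        rw [abs_mul]
        exact mul_le_of_le_one_right (abs_nonneg _) key2

lemma mesh_tendsto {L : ℝ} : Filter.Tendsto (fun m : ℕ => meshH L (2^m))
    Filter.atTop (nhds 0) := by
  have heq : (fun m : ℕ => meshH L (2^m)) = fun m : ℕ => (2*L) * ((1:ℝ)/2)^m := by
    funext m
    unfold meshH
    push_cast
    rw [div_pow, one_pow]
    field_simp
  rw [heq]
  have := (tendsto_pow_atTop_nhds_zero_of_lt_one (by norm_num : (0:ℝ) ≤ 1/2)
    (by norm_num : (1:ℝ)/2 < 1)).const_mul (2*L)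
  simpa using this

lemma theta_tendsto {L : ℝ} {k : ℕ} : Filter.Tendsto (fun m : ℕ => thetaK L (2^m) k)
    Filter.atTop (nhds 0) := by
  have : (fun m : ℕ => thetaK L (2^m) k) = fun m => aK L k * meshH L (2^m) := rfl
  rw [this]
  simpa using (mesh_tendsto (L := L)).const_mul (aK L k)

lemma theta_pos {L : ℝ} {k : ℕ} (hL : 0 < L) (hk : 1 ≤ k) (m : ℕ) :
    0 < thetaK L (2^m) k :=
  mul_pos (aK_pos hL hk) (meshH_pos hL (pow_pos (by norm_num) m))

lemma mu_rewrite (θ : ℝ) (hθ : θ ≠ 0) :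
    (1 - Real.cos θ) * (4 + 2*Real.cos θ) / (3*θ^2)
      = (Real.sin (θ/2) / (θ/2))^2 * ((4 + 2*Real.cos θ)/6) := by
  have hcos2 := Real.cos_two_mul' (θ/2)
  rw [show 2*(θ/2) = θ by ring] at hcos2
  have hpyth := Real.sin_sq_add_cos_sq (θ/2)
  have hcos : Real.cos θ = 1 - 2*Real.sin (θ/2)^2 := by rw [hcos2]; linarith
  rw [hcos]
  field_simp
  ring

lemma sin_div_tendsto : Filter.Tendsto (fun u : ℝ => Real.sin u / u)
    (nhdsWithin 0 {0}ᶜ) (nhds 1) := by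
  have h := hasDerivAt_iff_tendsto_slope.mp (Real.hasDerivAt_sin 0)
  rw [Real.cos_zero] at h
  apply h.congr
  intro u
  rw [slope_def_field]
  simp

lemma mu_tendsto {L : ℝ} {k : ℕ} (hL : 0 < L) (hk : 1 ≤ k) :
    Filter.Tendsto (fun m : ℕ => muJ L (2^m) k) Filter.atTop (nhds 1) := by
  have hu : Filter.Tendsto (fun m : ℕ => thetaK L (2^m) k / 2) Filter.atTop
      (nhdsWithin 0 {0}ᶜ) := by
    rw [tendsto_nhdsWithin_iff]
    constructor
    · simpa using (theta_tendsto (L := L) (k := k)).div_const 2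
    · exact Filter.Eventually.of_forall (fun m =>
        Set.mem_compl_singleton_iff.mpr (ne_of_gt (half_pos (theta_pos hL hk m))))
  have h1 : Filter.Tendsto
      (fun m : ℕ => Real.sin (thetaK L (2^m) k / 2) / (thetaK L (2^m) k / 2))
      Filter.atTop (nhds 1) := sin_div_tendsto.comp hu
  have h2 : Filter.Tendsto (fun m : ℕ => Real.cos (thetaK L (2^m) k))
      Filter.atTop (nhds 1) := by
    have := (Real.continuous_cos.tendsto 0).comp (theta_tendsto (L := L) (k := k))
    simpa [Function.comp_def] using this
  have h3 : Filter.Tendsto (fun m : ℕ =>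
      (Real.sin (thetaK L (2^m) k / 2) / (thetaK L (2^m) k / 2))^2
        * ((4 + 2*Real.cos (thetaK L (2^m) k))/6)) Filter.atTop
      (nhds ((1:ℝ)^2 * ((4 + 2*1)/6))) := by
    exact (h1.pow 2).mul (((h2.const_mul 2).const_add 4).div_const 6)
  norm_num at h3
  apply h3.congr
  intro m
  unfold muJ
  rw [mu_rewrite _ (ne_of_gt (theta_pos hL hk m))]


end Aux

/-- Estimate (5.12): for fixed `k ≥ 1` and `p ≥ 1`,
`‖e_k − R̄_h(R_h e_k)‖_{L^p((−L,L)²)} → 0` as `m → ∞` (`J = 2^m`, `h = 2L/J`). -/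
theorem stmt17 (L : ℝ) (hL : 0 < L) (k : ℕ) (hk : 1 ≤ k) (p : ℝ) (hp : 1 ≤ p) :
    Filter.Tendsto
      (fun m : ℕ =>
        eLpNorm (fun x => eK L k x - Rbar2 L (2 ^ m) (RhEk L (2 ^ m) k) x)
          (ENNReal.ofReal p) (volume.restrict (sq2 L)))
      Filter.atTop (nhds 0) := by
  set C : ℕ → ℝ := fun m => 2 * aK L k * meshH L (2^m) + |1 - muJ L (2^m) k| with hCdef
  have hC : Filter.Tendsto C Filter.atTop (nhds 0) := by
    have h1 : Filter.Tendsto (fun m : ℕ => 2 * aK L k * meshH L (2^m))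
        Filter.atTop (nhds 0) := by
      simpa using (mesh_tendsto (L := L)).const_mul (2 * aK L k)
    have h2 : Filter.Tendsto (fun m : ℕ => |1 - muJ L (2^m) k|)
        Filter.atTop (nhds 0) := by
      have := (tendsto_const_nhds (x := (1:ℝ)).sub (mu_tendsto hL hk)).abs
      simpa using this
    simpa using h1.add h2
  set K : ENNReal := (volume (sq2 L)) ^ (ENNReal.ofReal p).toReal⁻¹ with hKdef
  have hKne : K ≠ ⊤ := by
    apply ENNReal.rpow_ne_top_of_nonneg (inv_nonneg.mpr ENNReal.toReal_nonneg)
    unfold sq2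
    rw [MeasureTheory.Measure.volume_eq_prod, Measure.prod_prod, Real.volume_Ioo]
    exact ENNReal.mul_ne_top ENNReal.ofReal_ne_top ENNReal.ofReal_ne_top
  have hB : Filter.Tendsto (fun m => K * ENNReal.ofReal (C m)) Filter.atTop (nhds 0) := by
    have := ENNReal.Tendsto.const_mul (a := K) (ENNReal.tendsto_ofReal hC) (Or.inr hKne)
    simpa using this
  have hup : ∀ᶠ m in Filter.atTop,
      eLpNorm (fun x => eK L k x - Rbar2 L (2 ^ m) (RhEk L (2 ^ m) k) x)
        (ENNReal.ofReal p) (volume.restrict (sq2 L)) ≤ K * ENNReal.ofReal (C m) := by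
    filter_upwards [Filter.eventually_ge_atTop 2] with m hm
    have hJ4 : 4 ≤ 2^m := by
      calc (4:ℕ) = 2^2 := by norm_num
        _ ≤ 2^m := Nat.pow_le_pow_right (by norm_num) hm
    have hae : ∀ᵐ x ∂(volume.restrict (sq2 L)),
        ‖eK L k x - Rbar2 L (2 ^ m) (RhEk L (2 ^ m) k) x‖ ≤ C m := by
      rw [MeasureTheory.ae_restrict_iff' (μ := volume) (s := sq2 L)
        ((measurableSet_Ioo.prod measurableSet_Ioo : MeasurableSet (Set.Ioo (-L) L ×ˢ Set.Ioo (-L) L)))]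
      apply Filter.Eventually.of_forall
      intro x hx
      rw [Real.norm_eq_abs]
      exact pointwise_bound hL hk hJ4 hx
    have := eLpNorm_le_of_ae_bound (p := ENNReal.ofReal p) hae
    rwa [Measure.restrict_apply_univ] at this
  exact tendsto_of_tendsto_of_tendsto_of_le_of_le' tendsto_const_nhds hB
    (Filter.Eventually.of_forall (fun m => zero_le)) hup

end
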